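/- Let (M, d) be a metric space, γ a line in M, and x ∈ M with b_{γ⁺}(x) + b_{γ⁻}(x) = 0. Let r₊ and r₋ be rays with r₊(0) = r₋(0) = x such that b_{γ⁺}(r₊(t)) = b_{γ⁺}(x) − t for all t ≥ 0 and b_{γ⁻}(r₋(t)) = b_{γ⁻}(x) − t for all t ≥ 0. Then the concatenation γ′ : ℝ → M defined by γ′(t) = r₊(t) for t ≥ 0 and γ′(t) = r₋(−t) for t ≤ 0 is a line, i.e. d(γ′(s), γ′(s′)) = |s − s′| for all s, s′ ∈ ℝ. -/
import Mathlib


open Filter Topology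

variable {M : Type*} [MetricSpace M]

/-- A ray in a metric space: a map `γ` defined (in effect) on `[0, ∞)` with
`d(γ s, γ t) = |s - t|` for all `s, t ≥ 0`. -/
def IsRay (γ : ℝ → M) : Prop :=
  ∀ s t : ℝ, 0 ≤ s → 0 ≤ t → dist (γ s) (γ t) = |s - t|

/-- A line in a metric space: a map `γ : ℝ → M` with `d(γ s, γ t) = |s - t|`. -/
def IsLine (γ : ℝ → M) : Prop :=
  ∀ s t : ℝ, dist (γ s) (γ t) = |s - t|

/-- The Busemann function of a ray `γ`:
`b_γ(x) = lim_{t → ∞} (d(x, γ t) - t)`, which exists and equals the infimum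
since `t ↦ d(x, γ t) - t` is nonincreasing on `[0, ∞)` and bounded below. -/
noncomputable def busemann (γ : ℝ → M) (x : M) : ℝ :=
  ⨅ t : Set.Ici (0 : ℝ), (dist x (γ t) - (t : ℝ))

/-- For a line `γ`, the negative ray `γ⁻(t) = γ(-t)`.  (The positive ray `γ⁺`
is just `γ` itself, restricted to `[0, ∞)`.) -/
def negRay (γ : ℝ → M) : ℝ → M := fun t => γ (-t)

/-- The barrier function of a line `γ`: `B_γ = b_{γ⁺} + b_{γ⁻}`. -/
noncomputable def barrier (γ : ℝ → M) (x : M) : ℝ :=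
  busemann γ x + busemann (negRay γ) x

/-- `γ' ≺ γ`: the barrier of `γ` vanishes at `γ' 0` and both Busemann functions
`b_{γ⁺}`, `b_{γ⁻}` calibrate `γ'` (every forward translate of `γ'` is a coray to
`γ⁺` and every backward translate is a coray to `γ⁻`). -/
def Prec (γ' γ : ℝ → M) : Prop :=
  busemann γ (γ' 0) + busemann (negRay γ) (γ' 0) = 0 ∧
  ∀ t : ℝ, busemann γ (γ' t) = busemann γ (γ' 0) - t ∧
    busemann (negRay γ) (γ' t) = busemann (negRay γ) (γ' 0) + t

/-- A geodesic metric space: any two points are joined by a minimizing geodesic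
segment. -/
def IsGeodesicSpace (M : Type*) [MetricSpace M] : Prop :=
  ∀ x y : M, ∃ σ : ℝ → M, σ 0 = x ∧ σ (dist x y) = y ∧
    ∀ s t : ℝ, s ∈ Set.Icc 0 (dist x y) → t ∈ Set.Icc 0 (dist x y) →
      dist (σ s) (σ t) = |s - t|

/-- `γ'` is a coray to the ray `γ`: there are `tᵢ → ∞`, points `xᵢ → γ' 0` and
minimal geodesic segments `cᵢ` from `xᵢ` to `γ (tᵢ)` of length `Tᵢ = d(xᵢ, γ tᵢ) → ∞`
converging to `γ'` uniformly on compact subintervals of `[0, ∞)`. -/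
def IsCoray (γ' γ : ℝ → M) : Prop :=
  ∃ (t : ℕ → ℝ) (x : ℕ → M) (c : ℕ → ℝ → M),
    (∀ i, 0 ≤ t i) ∧
    Tendsto t atTop atTop ∧
    Tendsto x atTop (𝓝 (γ' 0)) ∧
    (∀ i, c i 0 = x i) ∧
    (∀ i, c i (dist (x i) (γ (t i))) = γ (t i)) ∧
    (∀ i, ∀ s s' : ℝ, s ∈ Set.Icc 0 (dist (x i) (γ (t i))) →
      s' ∈ Set.Icc 0 (dist (x i) (γ (t i))) → dist (c i s) (c i s') = |s - s'|) ∧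
    Tendsto (fun i => dist (x i) (γ (t i))) atTop atTop ∧
    (∀ K > (0 : ℝ), ∀ ε > (0 : ℝ), ∃ N : ℕ, ∀ i ≥ N,
      ∀ s ∈ Set.Icc (0 : ℝ) K, dist (c i s) (γ' s) < ε)

/-- The line `γ` has the uniqueness property: through each point of the zero set
of `B_γ` there is at most one line `γ''` with `γ'' ≺ γ`. -/
def HasUniqueCalibLine (γ : ℝ → M) : Prop :=
  ∀ x : M, barrier γ x = 0 →
    ∀ γ₁ γ₂ : ℝ → M, IsLine γ₁ → IsLine γ₂ → γ₁ 0 = x → γ₂ 0 = x →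
      Prec γ₁ γ → Prec γ₂ γ → γ₁ = γ₂

lemma busemann_bddBelow (γ : ℝ → M) (hγ : IsRay γ) (z : M) :
    BddBelow (Set.range fun t : Set.Ici (0 : ℝ) => dist z (γ t) - (t : ℝ)) := by
  refine ⟨-dist z (γ 0), ?_⟩
  rintro a ⟨t, rfl⟩
  have h1 : dist (γ 0) (γ t) = |0 - (t : ℝ)| := hγ 0 t le_rfl t.2
  have h2 : dist (γ 0) (γ t) ≤ dist (γ 0) z + dist z (γ t) := dist_triangle _ _ _
  rw [h1] at h2
  have ht : (0 : ℝ) ≤ t := t.2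
  rw [abs_of_nonpos (by linarith)] at h2
  rw [dist_comm] at h2
  show -dist z (γ 0) ≤ dist z (γ ↑t) - ↑t
  linarith

lemma busemann_lipschitz (γ : ℝ → M) (hγ : IsRay γ) (y z : M) :
    busemann γ y ≤ busemann γ z + dist y z := by
  rw [← sub_le_iff_le_add]
  refine le_ciInf fun t => ?_
  rw [sub_le_iff_le_add]
  have := ciInf_le (busemann_bddBelow γ hγ y) t
  refine this.trans ?_
  have h3 := dist_triangle y z (γ t)
  exact le_trans (by linarith) le_rfl

lemma barrier_nonneg (γ : ℝ → M) (hγ : IsLine γ) (y : M) :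
    0 ≤ busemann γ y + busemann (negRay γ) y := by
  have hray : IsRay γ := fun s t hs ht => hγ s t
  have hnegray : IsRay (negRay γ) := fun s t hs ht => by
    have := hγ (-s) (-t)
    simp only [negRay]
    rw [this, abs_sub_comm]
    congr 1; ring
  rw [← neg_le_iff_add_nonneg]
  refine le_ciInf fun t₁ => ?_
  rw [neg_le]
  refine le_ciInf fun t₂ => ?_
  have h := dist_triangle (γ t₁) y (negRay γ t₂)
  have hd : dist (γ (t₁ : ℝ)) (negRay γ t₂) = (t₁ : ℝ) + t₂ := by
    have := hγ (t₁ : ℝ) (-(t₂ : ℝ))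
    have ht1 : (0 : ℝ) ≤ t₁ := t₁.2
    have ht2 : (0 : ℝ) ≤ t₂ := t₂.2
    rw [abs_of_nonneg (by linarith)] at this
    simp only [negRay]
    linarith
  rw [hd, dist_comm (γ (t₁ : ℝ)) y] at h
  show -(dist y (γ ↑t₁) - ↑t₁) ≤ dist y (negRay γ ↑t₂) - ↑t₂
  linarith

/-- the concatenation of two calibrated rays issued from a point
where the barrier function of a line vanishes is a line. -/
theorem concat_of_calibrated_rays_isLine (γ : ℝ → M) (hγ : IsLine γ) (x : M)
    (hx : busemann γ x + busemann (negRay γ) x = 0)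
    (rp rm : ℝ → M) (hrp : IsRay rp) (hrm : IsRay rm)
    (h0p : rp 0 = x) (h0m : rm 0 = x)
    (hcalp : ∀ t : ℝ, 0 ≤ t → busemann γ (rp t) = busemann γ x - t)
    (hcalm : ∀ t : ℝ, 0 ≤ t → busemann (negRay γ) (rm t) = busemann (negRay γ) x - t)
    (γ' : ℝ → M) (hγ' : ∀ t : ℝ, γ' t = if 0 ≤ t then rp t else rm (-t)) :
    IsLine γ' := by
  have hray : IsRay γ := fun s t hs ht => hγ s t
  have key : ∀ a b : ℝ, 0 ≤ a → 0 ≤ b → dist (rp a) (rm b) = a + b := by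
    intro a b ha hb
    have hup : dist (rp a) (rm b) ≤ a + b := by
      have h1 : dist (rp a) x = a := by
        have := hrp a 0 ha le_rfl; rw [h0p] at this; simpa [abs_of_nonneg ha] using this
      have h2 : dist x (rm b) = b := by
        have := hrm 0 b le_rfl hb; rw [h0m] at this
        rw [this, abs_of_nonpos (by linarith)]; ring
      calc dist (rp a) (rm b) ≤ dist (rp a) x + dist x (rm b) := dist_triangle _ _ _
        _ = a + b := by rw [h1, h2]
    have hlow : a + b ≤ dist (rp a) (rm b) := by
      have hlip := busemann_lipschitz γ hray (rm b) (rp a)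
      have hsum := barrier_nonneg γ hγ (rm b)
      have h1 := hcalp a ha
      have h2 := hcalm b hb
      rw [dist_comm] at hlip
      linarith
    linarith
  intro s t
  rw [hγ' s, hγ' t]
  rcases le_or_gt 0 s with hs | hs <;> rcases le_or_gt 0 t with ht | ht
  · simp only [if_pos hs, if_pos ht]
    exact hrp s t hs ht
  · simp only [if_pos hs, if_neg (not_le.2 ht)]
    rw [key s (-t) hs (by linarith), abs_of_nonneg (by linarith)]
    ring
  · simp only [if_neg (not_le.2 hs), if_pos ht]
    rw [dist_comm, key t (-s) ht (by linarith), abs_of_nonpos (by linarith)]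
    ring
  · simp only [if_neg (not_le.2 hs), if_neg (not_le.2 ht)]
    rw [hrm (-s) (-t) (by linarith) (by linarith), abs_sub_comm]
    congr 1; ring
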